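/- Let φ be a CNF formula with variable set X = {x_1, …, x_n} and clause set C = {C_1, …, C_m}, where each clause is a set of literals and no clause contains both a variable and its negation, and let G_φ be the graph associated to φ (defined in the context). Then φ has a satisfying truth assignment if and only if the vertex set of G_φ can be partitioned into n independent sets and one clique (i.e., G_φ is an (n,1)-graph). -/

import Mathlib

variable {V : Type*}

/-- A set of vertices is an *independent set*: no two of its vertices are adjacent. -/
def IndepSet (G : SimpleGraph V) (s : Set V) : Prop :=
  s.Pairwise fun u v => ¬ G.Adj u v

/-- The set `W` can be partitioned into `r` (pairwise disjoint) independent sets of `G`. -/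
def PartitionIntoIndepSets (r : ℕ) (G : SimpleGraph V) (W : Set V) : Prop :=
  ∃ I : Fin r → Set V, (⋃ i, I i) = W ∧ Pairwise (Function.onFun Disjoint I) ∧
    ∀ i, IndepSet G (I i)

/-- The set `W` can be partitioned into `l` (pairwise disjoint) cliques of `G`. -/
def PartitionIntoCliques (l : ℕ) (G : SimpleGraph V) (W : Set V) : Prop :=
  ∃ K : Fin l → Set V, (⋃ j, K j) = W ∧ Pairwise (Function.onFun Disjoint K) ∧
    ∀ j, G.IsClique (K j)

/-- `(V1, V2)` is an IC-partition of the ground set `W` in `G`: `V1` and `V2` partition `W`,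
`V1` is partitioned into `r` independent sets and `V2` into `l` cliques. -/
def IsICPartitionOn (r l : ℕ) (G : SimpleGraph V) (W V1 V2 : Set V) : Prop :=
  Disjoint V1 V2 ∧ V1 ∪ V2 = W ∧
    PartitionIntoIndepSets r G V1 ∧ PartitionIntoCliques l G V2

/-- `(V1, V2)` is an IC-partition of `G` realizing that `G` is an `(r,l)`-graph. -/
def IsICPartition (r l : ℕ) (G : SimpleGraph V) (V1 V2 : Set V) : Prop :=
  IsICPartitionOn r l G Set.univ V1 V2

/-- `G` is an `(r,l)`-graph: its vertex set can be partitioned into `r` independent sets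
and `l` cliques. -/
def IsRLGraph (r l : ℕ) (G : SimpleGraph V) : Prop :=
  ∃ V1 V2 : Set V, IsICPartition r l G V1 V2

/-- Vertices of the graph associated to a CNF formula with `n` variables and `m` clauses:
literal vertices `(x, b)` (the literal is `x` if `b = true` and `¬x` if `b = false`),
and two clause vertices for each clause. -/
abbrev FormulaVertex (n m : ℕ) := (Fin n × Bool) ⊕ (Fin m × Fin 2)

/-- Adjacency of the graph associated to a CNF formula: two literal vertices are adjacent
iff they belong to distinct variables; a literal vertex is adjacent to a clause vertex iff
the literal does not occur in the clause; clause vertices are pairwise non-adjacent. -/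
def formulaAdj {n m : ℕ} (C : Fin m → Finset (Fin n × Bool)) :
    FormulaVertex n m → FormulaVertex n m → Prop
  | .inl p, .inl q => p.1 ≠ q.1
  | .inl q, .inr c => q ∉ C c.1
  | .inr c, .inl q => q ∉ C c.1
  | .inr _, .inr _ => False

/-- The graph `G_φ` associated to a CNF formula `φ` whose clauses are given by
`C : Fin m → Finset (Fin n × Bool)`. -/
def formulaGraph {n m : ℕ} (C : Fin m → Finset (Fin n × Bool)) :
    SimpleGraph (FormulaVertex n m) where
  Adj := formulaAdj C
  symm := by
    constructor
    rintro (p | c) (q | d) h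
    · exact fun e => h e.symm
    · exact h
    · exact h
    · exact h.elim
  loopless := by
    constructor
    rintro (p | c) h
    · exact h rfl
    · exact h

/-- No clause contains both a variable and its negation. -/
def NoComplementaryLiterals {n m : ℕ} (C : Fin m → Finset (Fin n × Bool)) : Prop :=
  ∀ c : Fin m, ∀ x : Fin n, ¬ ((x, true) ∈ C c ∧ (x, false) ∈ C c)

/-!
A clique of `G_φ` contains at most one literal of each variable and at most one vertex of each
clause, so its complement contains a literal `ℓ_x` of every variable `x` and a vertex of every
clause. The literals `ℓ_x` are pairwise adjacent, so an `n`-colouring of the complement gives them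
all `n` colours; a clause vertex shares its colour with some `ℓ_x`, is therefore not adjacent to
it, i.e. `ℓ_x` occurs in the clause, and the assignment making every `ℓ_x` true satisfies `φ`.
Conversely, the literals made false by a satisfying assignment form a clique, and colouring each
true literal by its variable and each clause vertex by the variable of a true literal of the
clause is proper.
-/

namespace SimpleGraph

variable {G : SimpleGraph V}

theorem partitionIntoIndepSets_iff_colorable {r : ℕ} {W : Set V} :
    PartitionIntoIndepSets r G W ↔ (G.induce W).Colorable r := by
  constructor
  · rintro ⟨I, hIW, -, hind⟩
    have hmem (w : W) : ∃ i, (w : V) ∈ I i := Set.mem_iUnion.1 (hIW ▸ w.2)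
    choose color hcolor using hmem
    refine ⟨Coloring.mk color fun {u v} huv hcol => ?_⟩
    exact hind _ (hcolor u) (hcol ▸ hcolor v) (G.ne_of_adj huv) huv
  · rintro ⟨c⟩
    refine ⟨fun i => Subtype.val '' (c ⁻¹' {i}), ?_, ?_, ?_⟩
    · ext v
      simp only [Set.mem_iUnion, Set.mem_image, Set.mem_preimage, Set.mem_singleton_iff]
      exact ⟨fun ⟨_, w, _, hw⟩ => hw ▸ w.2, fun hv => ⟨_, ⟨v, hv⟩, rfl, rfl⟩⟩
    · intro i j hij
      refine Set.disjoint_left.2 ?_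
      rintro _ ⟨u, rfl, rfl⟩ ⟨v, hv, huv⟩
      exact hij (Subtype.val_injective huv ▸ hv)
    · rintro i _ ⟨u, rfl, rfl⟩ _ ⟨v, hv, rfl⟩ - huv
      exact c.valid (induce_adj.2 huv) hv.symm

theorem partitionIntoCliques_one_iff {W : Set V} :
    PartitionIntoCliques 1 G W ↔ G.IsClique W := by
  constructor
  · rintro ⟨K, rfl, -, hK⟩
    rw [show (⋃ j, K j) = K default from iSup_unique K]
    exact hK default
  · intro hW
    exact ⟨fun _ => W, Set.iUnion_const W, fun i j hij => (hij (Subsingleton.elim i j)).elim,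
      fun _ => hW⟩

theorem isRLGraph_one_iff {r : ℕ} :
    IsRLGraph r 1 G ↔ ∃ K : Set V, G.IsClique K ∧ (G.induce Kᶜ).Colorable r := by
  simp only [IsRLGraph, IsICPartition, IsICPartitionOn, partitionIntoIndepSets_iff_colorable,
    partitionIntoCliques_one_iff]
  constructor
  · rintro ⟨V1, K, hdisj, hunion, hcol, hK⟩
    obtain rfl : V1 = Kᶜ := (isCompl_iff.2 ⟨hdisj, codisjoint_iff.2 hunion⟩).eq_compl
    exact ⟨K, hK, hcol⟩
  · rintro ⟨K, hK, hcol⟩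
    exact ⟨Kᶜ, K, disjoint_compl_left, Set.compl_union_self K, hcol, hK⟩

end SimpleGraph

section FormulaGraph

open SimpleGraph

variable {n m : ℕ} {C : Fin m → Finset (Fin n × Bool)}

theorem formulaGraph_adj_inl_inl {p q : Fin n × Bool} :
    (formulaGraph C).Adj (.inl p) (.inl q) ↔ p.1 ≠ q.1 := Iff.rfl

theorem formulaGraph_adj_inl_inr {q : Fin n × Bool} {c : Fin m × Fin 2} :
    (formulaGraph C).Adj (.inl q) (.inr c) ↔ q ∉ C c.1 := Iff.rfl

theorem formulaGraph_adj_inr_inl {q : Fin n × Bool} {c : Fin m × Fin 2} :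
    (formulaGraph C).Adj (.inr c) (.inl q) ↔ q ∉ C c.1 := Iff.rfl

theorem not_formulaGraph_adj_inr_inr {c d : Fin m × Fin 2} :
    ¬ (formulaGraph C).Adj (.inr c) (.inr d) := id

def falseLiterals (τ : Fin n → Bool) : Set (FormulaVertex n m) :=
  Set.range fun x => .inl (x, !τ x)

theorem inl_notMem_falseLiterals {τ : Fin n → Bool} {q : Fin n × Bool} :
    (.inl q : FormulaVertex n m) ∉ falseLiterals τ ↔ τ q.1 = q.2 := by
  obtain ⟨x, b⟩ := q
  simp [falseLiterals]

theorem isClique_falseLiterals (τ : Fin n → Bool) :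
    (formulaGraph C).IsClique (falseLiterals τ) := by
  rintro _ ⟨x, rfl⟩ _ ⟨y, rfl⟩ hxy (rfl : x = y)
  exact hxy rfl

theorem colorable_compl_falseLiterals {τ : Fin n → Bool}
    (hτ : ∀ c : Fin m, ∃ q ∈ C c, τ q.1 = q.2) :
    ((formulaGraph C).induce (falseLiterals τ)ᶜ).Colorable n := by
  choose w hwC hwτ using hτ
  let color : FormulaVertex n m → Fin n
    | .inl q => q.1
    | .inr c => (w c.1).1
  have var_ne {q : Fin n × Bool} {c : Fin m} (hq : τ q.1 = q.2) (hqc : q ∉ C c) :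
      q.1 ≠ (w c).1 :=
    fun h => hqc (Prod.ext h.symm ((hwτ c).symm.trans (h ▸ hq)) ▸ hwC c)
  refine ⟨Coloring.mk (fun v => color v) ?_⟩
  rintro ⟨p | c, hu⟩ ⟨q | d, hv⟩ huv
  · exact formulaGraph_adj_inl_inl.1 (induce_adj.1 huv)
  · exact var_ne (inl_notMem_falseLiterals.1 hu) (formulaGraph_adj_inl_inr.1 (induce_adj.1 huv))
  · exact (var_ne (inl_notMem_falseLiterals.1 hv)
      (formulaGraph_adj_inr_inl.1 (induce_adj.1 huv))).symm
  · exact (not_formulaGraph_adj_inr_inr (induce_adj.1 huv)).elim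

theorem exists_inl_notMem_of_isClique {K : Set (FormulaVertex n m)}
    (hK : (formulaGraph C).IsClique K) (x : Fin n) : ∃ b, .inl (x, b) ∉ K := by
  by_contra! h
  exact formulaGraph_adj_inl_inl.1 (hK (h true) (h false) (by simp)) rfl

theorem exists_inr_notMem_of_isClique {K : Set (FormulaVertex n m)}
    (hK : (formulaGraph C).IsClique K) (c : Fin m) : ∃ j, .inr (c, j) ∉ K := by
  by_contra! h
  exact not_formulaGraph_adj_inr_inr (hK (h 0) (h 1) (by simp))

theorem satisfiable_of_isClique_of_colorable {K : Set (FormulaVertex n m)}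
    (hK : (formulaGraph C).IsClique K) (hcol : ((formulaGraph C).induce Kᶜ).Colorable n) :
    ∃ τ : Fin n → Bool, ∀ c : Fin m, ∃ q ∈ C c, τ q.1 = q.2 := by
  obtain ⟨col⟩ := hcol
  choose τ hτ using exists_inl_notMem_of_isClique hK
  have hsurj : Function.Surjective (col ∘ fun x => ⟨.inl (x, τ x), hτ x⟩) :=
    Finite.surjective_of_injective (col.injective_comp_of_pairwise_adj _ 
      fun _ _ h => induce_adj.2 (formulaGraph_adj_inl_inl.2 h))
  refine ⟨τ, fun c => ?_⟩
  obtain ⟨j, hj⟩ := exists_inr_notMem_of_isClique hK c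
  obtain ⟨x, hx⟩ := hsurj (col ⟨.inr (c, j), hj⟩)
  refine ⟨(x, τ x), ?_, rfl⟩
  by_contra hxc
  have hadj :
      ((formulaGraph C).induce Kᶜ).Adj ⟨.inl (x, τ x), hτ x⟩ ⟨.inr (c, j), hj⟩ :=
    induce_adj.2 (formulaGraph_adj_inl_inr.2 hxc)
  exact col.valid hadj hx

end FormulaGraph

theorem formula_satisfiable_iff_rlGraph_general {n m : ℕ} (C : Fin m → Finset (Fin n × Bool)) :
    (∃ τ : Fin n → Bool, ∀ c : Fin m, ∃ q ∈ C c, τ q.1 = q.2) ↔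
      IsRLGraph n 1 (formulaGraph C) := by
  rw [SimpleGraph.isRLGraph_one_iff]
  constructor
  · rintro ⟨τ, hτ⟩
    exact ⟨falseLiterals τ, isClique_falseLiterals τ, colorable_compl_falseLiterals hτ⟩
  · rintro ⟨K, hK, hcol⟩
    exact satisfiable_of_isClique_of_colorable hK hcol

/-- a CNF formula with `n` variables is satisfiable if and only if the
associated graph is an `(n,1)`-graph, i.e. its vertex set can be partitioned into `n`
independent sets and one clique. A literal `(x, b)` is made true by the assignment `τ`
exactly when `τ x = b`. -/
theorem formula_satisfiable_iff_rlGraph {n m : ℕ} (C : Fin m → Finset (Fin n × Bool))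
    (hC : NoComplementaryLiterals C) :
    (∃ τ : Fin n → Bool, ∀ c : Fin m, ∃ q ∈ C c, τ q.1 = q.2) ↔
      IsRLGraph n 1 (formulaGraph C) :=
  formula_satisfiable_iff_rlGraph_general C
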